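/- arXiv:2305.17319 — 8 statements merged into one kernel-verified Lean document; each statement's English description precedes it below -/
import Mathlib

section
/- Let θ_i and θ_j be unit vectors in ℝ². Then the μ-probability of the set of t ∈ [0, 2π] such that sign(⟪θ_i, v(t)⟫) = sign(⟪θ_j, v(t)⟫) equals (π − arccos(⟪θ_i, θ_j⟫))/π. -/
open Real MeasureTheory

/-- The unit direction vector `(cos t, sin t)` in the Euclidean plane. -/
noncomputable def v (t : ℝ) : EuclideanSpace ℝ (Fin 2) :=
  (WithLp.equiv 2 (Fin 2 → ℝ)).symm ![Real.cos t, Real.sin t]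

/-- The uniform probability measure on `[0, 2π]`. -/
noncomputable def μunif : Measure ℝ :=
  (ENNReal.ofReal (2 * Real.pi)⁻¹) • (volume.restrict (Set.Icc 0 (2 * Real.pi)))

/-! Write `θᵢ = v a`, `θⱼ = v b`, so that `⟪θᵢ, v t⟫ = cos (t - a)` and `⟪θⱼ, v t⟫ = cos (t - b)`.
After the translation `s = t - a` the agreement set is the `2π`-periodic set of `s` where `cos s`
and `cos (s - d)` have the same sign, `d = b - a`. Its measure over one period does not depend on
where the period starts, and it is unchanged by `d ↦ -d` and `d ↦ d + 2πk`, so we may take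
`d = arccos (cos d) ∈ [0, π]`. On the period `(d - π/2, d + 3π/2]` the signs agree exactly on
`(d - π/2, π/2) ∪ (d + π/2, 3π/2)` up to finitely many points, a set of length `2 (π - d)`. -/

open Set Filter

lemma Real.measurable_sign : Measurable Real.sign :=
  Measurable.ite measurableSet_Iio measurable_const
    (Measurable.ite (measurableSet_lt measurable_const measurable_id) measurable_const
      measurable_const)

lemma measure_inter_Ioc_eq_of_periodic {A : Set ℝ} (hA : MeasurableSet A) {T : ℝ} (hT : 0 < T)
    (hper : Function.Periodic (· ∈ A) T) (x y : ℝ) :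
    volume (A ∩ Ioc x (x + T)) = volume (A ∩ Ioc y (y + T)) := by
  refine (isAddFundamentalDomain_Ioc hT x).measure_set_eq (isAddFundamentalDomain_Ioc hT y) hA ?_
  rintro ⟨_, n, rfl⟩
  ext s
  simp only [mem_preimage, AddSubgroup.vadd_def, vadd_eq_add]
  exact add_comm (n • T) s ▸ Iff.of_eq (hper.zsmul n s)

def cosSignAgreeSet (d : ℝ) : Set ℝ := {s | sign (cos s) = sign (cos (s - d))}

lemma measurableSet_cosSignAgreeSet (d : ℝ) : MeasurableSet (cosSignAgreeSet d) :=
  measurableSet_eq_fun (Real.measurable_sign.comp measurable_cos)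
    (Real.measurable_sign.comp (measurable_cos.comp (measurable_id.sub_const d)))

lemma cosSignAgreeSet_periodic (d : ℝ) : Function.Periodic (· ∈ cosSignAgreeSet d) (2 * π) := by
  intro s
  simp only [cosSignAgreeSet, mem_ofPred_eq, cos_add_two_pi, add_sub_right_comm]

lemma cosSignAgreeSet_add_int_mul_two_pi (d : ℝ) (k : ℤ) :
    cosSignAgreeSet (d + k * (2 * π)) = cosSignAgreeSet d := by
  ext s
  simp only [cosSignAgreeSet, mem_ofPred_eq, ← sub_sub, cos_sub_int_mul_two_pi]

lemma cosSignAgreeSet_neg (d : ℝ) : cosSignAgreeSet (-d) = (· + d) ⁻¹' cosSignAgreeSet d := by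
  ext s
  simp only [cosSignAgreeSet, mem_ofPred_eq, mem_preimage, sub_neg_eq_add, add_sub_cancel_right]
  exact eq_comm

lemma sign_cos_of_mem_Ioo {s : ℝ} (hs : s ∈ Ioo (-(π / 2)) (π / 2)) : sign (cos s) = 1 :=
  sign_of_pos (cos_pos_of_mem_Ioo hs)

lemma sign_cos_of_pi_div_two_lt_of_lt {s : ℝ} (h₁ : π / 2 < s) (h₂ : s < π + π / 2) :
    sign (cos s) = -1 :=
  sign_of_neg (cos_neg_of_pi_div_two_lt_of_lt h₁ h₂)

lemma cosSignAgreeSet_inter_Ioc_ae_eq {d : ℝ} (hd₀ : 0 ≤ d) (hdπ : d ≤ π) :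
    (cosSignAgreeSet d ∩ Ioc (d - π / 2) (d - π / 2 + 2 * π) : Set ℝ) =ᵐ[volume]
      (Ioo (d - π / 2) (π / 2) ∪ Ioo (d + π / 2) (π + π / 2) : Set ℝ) := by
  have hπ := pi_pos
  have hZ : ∀ᵐ s, s ∉ ({π / 2, d + π / 2, π + π / 2, d - π / 2 + 2 * π} : Set ℝ) :=
    measure_eq_zero_iff_ae_notMem.1 ((toFinite _).measure_zero volume)
  refine eventuallyEq_set.2 (hZ.mono fun s hs => ?_)
  simp only [mem_insert_iff, mem_singleton_iff, not_or] at hs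
  obtain ⟨h₁, h₂, h₃, h₄⟩ := hs
  simp only [cosSignAgreeSet, mem_inter_iff, mem_ofPred_eq, mem_Ioc, mem_union, mem_Ioo]
  by_cases hw : d - π / 2 < s ∧ s ≤ d - π / 2 + 2 * π
  swap
  · exact iff_of_false (fun h => hw h.2)
      (by rintro (⟨_, _⟩ | ⟨_, _⟩) <;> exact hw ⟨by linarith, by linarith⟩)
  obtain ⟨hlo, hhi⟩ := hw
  rcases lt_or_gt_of_ne h₁ with h₁ | h₁
  · rw [sign_cos_of_mem_Ioo ⟨by linarith, h₁⟩, sign_cos_of_mem_Ioo ⟨by linarith, by linarith⟩]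
    exact iff_of_true ⟨rfl, hlo, hhi⟩ (Or.inl ⟨hlo, h₁⟩)
  rcases lt_or_gt_of_ne h₂ with h₂ | h₂
  · rw [sign_cos_of_pi_div_two_lt_of_lt h₁ (by linarith),
      sign_cos_of_mem_Ioo ⟨by linarith, by linarith⟩]
    exact iff_of_false (by norm_num) (by rintro (⟨_, _⟩ | ⟨_, _⟩) <;> linarith)
  rcases lt_or_gt_of_ne h₃ with h₃ | h₃
  · rw [sign_cos_of_pi_div_two_lt_of_lt h₁ h₃,
      sign_cos_of_pi_div_two_lt_of_lt (by linarith) (by linarith)]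
    exact iff_of_true ⟨rfl, hlo, hhi⟩ (Or.inr ⟨h₂, h₃⟩)
  · have hhi := lt_of_le_of_ne hhi h₄
    rw [← cos_sub_two_pi, sign_cos_of_mem_Ioo ⟨by linarith, by linarith⟩,
      sign_cos_of_pi_div_two_lt_of_lt (by linarith) (by linarith)]
    exact iff_of_false (by norm_num) (by rintro (⟨_, _⟩ | ⟨_, _⟩) <;> linarith)

lemma volume_cosSignAgreeSet_inter_Ioc_of_mem_Icc {d : ℝ} (hd₀ : 0 ≤ d) (hdπ : d ≤ π) (x : ℝ) :
    volume (cosSignAgreeSet d ∩ Ioc x (x + 2 * π)) = ENNReal.ofReal (2 * (π - d)) := by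
  have hπ := pi_pos
  have hdisj : Disjoint (Ioo (d - π / 2) (π / 2)) (Ioo (d + π / 2) (π + π / 2)) :=
    (Ioc_disjoint_Ioc_of_le (by linarith)).mono Ioo_subset_Ioc_self Ioo_subset_Ioc_self
  rw [measure_inter_Ioc_eq_of_periodic (measurableSet_cosSignAgreeSet d) two_pi_pos
      (cosSignAgreeSet_periodic d) x (d - π / 2),
    measure_congr (cosSignAgreeSet_inter_Ioc_ae_eq hd₀ hdπ), measure_union hdisj measurableSet_Ioo,
    volume_Ioo, volume_Ioo, ← ENNReal.ofReal_add (by linarith) (by linarith)]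
  ring_nf

lemma volume_cosSignAgreeSet_inter_Ioc (d x : ℝ) :
    volume (cosSignAgreeSet d ∩ Ioc x (x + 2 * π)) =
      ENNReal.ofReal (2 * (π - arccos (cos d))) := by
  set d' := arccos (cos d)
  have hd₀ : 0 ≤ d' := arccos_nonneg _
  have hdπ : d' ≤ π := arccos_le_pi _
  obtain ⟨k, hk | hk⟩ := cos_eq_cos_iff.1 (cos_arccos (neg_one_le_cos d) (cos_le_one d))
  · rw [show d = d' + k * (2 * π) by linarith, cosSignAgreeSet_add_int_mul_two_pi,
      volume_cosSignAgreeSet_inter_Ioc_of_mem_Icc hd₀ hdπ]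
  · have hneg : cosSignAgreeSet (-d') ∩ Ioc x (x + 2 * π) =
        (· + d') ⁻¹' (cosSignAgreeSet d' ∩ Ioc (x + d') (x + d' + 2 * π)) := by
      rw [cosSignAgreeSet_neg, preimage_inter, preimage_add_const_Ioc, add_sub_cancel_right,
        add_right_comm, add_sub_cancel_right]
    rw [show d = -d' + k * (2 * π) by linarith, cosSignAgreeSet_add_int_mul_two_pi, hneg,
      measure_preimage_add_right, volume_cosSignAgreeSet_inter_Ioc_of_mem_Icc hd₀ hdπ]

lemma volume_setOf_sign_cos_sub_eq (a b x : ℝ) :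
    volume {t ∈ Icc x (x + 2 * π) | sign (cos (t - a)) = sign (cos (t - b))} =
      ENNReal.ofReal (2 * (π - arccos (cos (b - a)))) := by
  have hset : {t ∈ Icc x (x + 2 * π) | sign (cos (t - a)) = sign (cos (t - b))} =
      (· + -a) ⁻¹' (cosSignAgreeSet (b - a) ∩ Icc (x - a) (x - a + 2 * π)) := by
    ext t
    simp only [cosSignAgreeSet, mem_ofPred_eq, mem_preimage, mem_inter_iff, mem_Icc,
      ← sub_eq_add_neg, sub_sub_sub_cancel_right, sub_le_sub_iff_right, sub_add_eq_add_sub,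
      and_comm]
  rw [hset, measure_preimage_add_right,
    ← measure_congr (ae_eq_set_inter (EventuallyEq.refl _ (cosSignAgreeSet (b - a))) Ioc_ae_eq_Icc),
    volume_cosSignAgreeSet_inter_Ioc]

lemma exists_eq_v_of_norm_eq_one {θ : EuclideanSpace ℝ (Fin 2)} (hθ : ‖θ‖ = 1) : ∃ a, θ = v a := by
  obtain ⟨a, ha⟩ := (Complex.norm_eq_one_iff _).1
    ((Complex.orthonormalBasisOneI.repr.symm.norm_map θ).trans hθ)
  refine ⟨a, ?_⟩
  rw [← Complex.orthonormalBasisOneI.repr.apply_symm_apply θ, ← ha]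
  ext i
  fin_cases i <;>
    simp [v, Complex.orthonormalBasisOneI_repr_apply, Complex.exp_ofReal_mul_I_re,
      Complex.exp_ofReal_mul_I_im]

lemma inner_v_v (a t : ℝ) : inner ℝ (v a) (v t) = cos (t - a) := by
  simp [v, PiLp.inner_apply, Fin.sum_univ_two, cos_sub]

/-- Proposition 1: the level of agreement between two unit preference vectors equals
`(π − arccos⟪θᵢ, θⱼ⟫)/π`. -/
theorem stmt_0 (θi θj : EuclideanSpace ℝ (Fin 2)) (hi : ‖θi‖ = 1) (hj : ‖θj‖ = 1) :
    μunif {t ∈ Set.Icc (0 : ℝ) (2 * Real.pi) |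
        Real.sign (inner ℝ θi (v t) : ℝ) = Real.sign (inner ℝ θj (v t) : ℝ)} =
      ENNReal.ofReal ((Real.pi - Real.arccos (inner ℝ θi θj : ℝ)) / Real.pi) := by
  obtain ⟨a, rfl⟩ := exists_eq_v_of_norm_eq_one hi
  obtain ⟨b, rfl⟩ := exists_eq_v_of_norm_eq_one hj
  have hπ := pi_pos
  have hvol := volume_setOf_sign_cos_sub_eq a b 0
  rw [zero_add] at hvol
  simp only [inner_v_v]
  rw [μunif, Measure.smul_apply, Measure.restrict_apply' measurableSet_Icc,
    inter_eq_left.2 (sep_subset _ _), hvol, smul_eq_mul, ← ENNReal.ofReal_mul (by positivity)]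
  congr 1
  field_simp
end

section
/- Let θ*_A and θ*_D be unit vectors in ℝ² with θ*_A ≠ θ*_D, let 0 < α < 1/2, and let θ_C = θ_C(θ*_A, θ*_D) be the aggregate of the truthfully reported vectors. Then arccos(⟪θ_C, θ*_A⟫) < α · arccos(⟪θ*_D, θ*_A⟫); that is, the fraction of disputed cases where the minority prevails, arccos(⟪θ_C, θ*_A⟫)/arccos(⟪θ*_D, θ*_A⟫), is strictly less than the minority's population share α. -/
/-!
Let `φ` be the angle between `θ*_D` and `θ*_A`, and `v = α θ*_D + (1 - α) θ*_A`. Projecting `v`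
onto `θ*_A` and its orthogonal complement gives `⟪v, θ*_A⟫ = 1 - α + α cos φ` and
`‖v‖² = (1 - α + α cos φ)² + (α sin φ)²`, so `cos ∠(v, θ*_A) > cos (α φ)` amounts to
`α sin φ cos (α φ) < (1 - α + α cos φ) sin (α φ)`, i.e. `α sin ((1 - α) φ) < (1 - α) sin (α φ)`.
Since `α φ < (1 - α) φ ≤ π`, this is the strict decrease of `sin x / x` on `(0, π]`, a consequence
of the strict concavity of `sin` there.
-/

open Real

/-- The aggregate vector `(α θ_D + (1−α) θ_A)/‖α θ_D + (1−α) θ_A‖`. -/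
noncomputable def aggregate (α : ℝ) (θA θD : EuclideanSpace ℝ (Fin 2)) :
    EuclideanSpace ℝ (Fin 2) :=
  (‖α • θD + (1 - α) • θA‖)⁻¹ • (α • θD + (1 - α) • θA)

lemma Real.mul_sin_lt_mul_sin {x y : ℝ} (hx : 0 < x) (hxy : x < y) (hy : y ≤ π) :
    x * sin y < y * sin x := by
  have h := strictConcaveOn_sin_Icc.secant_strict_mono (a := 0) ⟨le_rfl, pi_pos.le⟩
    ⟨hx.le, hxy.le.trans hy⟩ ⟨hx.le.trans hxy.le, hy⟩ hx.ne' (hx.trans hxy).ne' hxy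
  simp only [sin_zero, sub_zero] at h
  rwa [div_lt_div_iff₀ (hx.trans hxy) hx, mul_comm, mul_comm (sin x)] at h

lemma Real.mul_sin_mul_cos_mul_lt {α φ : ℝ} (hα : 0 < α) (hα' : α < 1 / 2) (hφ : 0 < φ)
    (hφπ : φ ≤ π) :
    α * sin φ * cos (α * φ) < (1 - α + α * cos φ) * sin (α * φ) := by
  have hsin := mul_sin_lt_mul_sin (mul_pos hα hφ)
    (mul_lt_mul_of_pos_right (by linarith) hφ) (by nlinarith : (1 - α) * φ ≤ π)
  rw [show (1 - α) * φ = φ - α * φ by ring, sin_sub] at hsin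
  refine lt_of_mul_lt_mul_left ?_ hφ.le
  linear_combination hsin

lemma Real.mul_cos_mul_lt {α φ r : ℝ} (hα : 0 < α) (hα' : α < 1 / 2) (hφ : 0 < φ)
    (hφπ : φ ≤ π) (hr : r ^ 2 = (1 - α + α * cos φ) ^ 2 + (α * sin φ) ^ 2) :
    r * cos (α * φ) < 1 - α + α * cos φ := by
  have hx : 0 < 1 - α + α * cos φ := by nlinarith [neg_one_le_cos φ]
  have hcos : 0 ≤ cos (α * φ) := cos_nonneg_of_mem_Icc ⟨by nlinarith [pi_pos], by nlinarith⟩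
  have hsin : 0 ≤ sin φ := sin_nonneg_of_nonneg_of_le_pi hφ.le hφπ
  have hsq : (α * sin φ * cos (α * φ)) ^ 2 < ((1 - α + α * cos φ) * sin (α * φ)) ^ 2 :=
    pow_lt_pow_left₀ (mul_sin_mul_cos_mul_lt hα hα' hφ hφπ) (by positivity) two_ne_zero
  refine lt_of_pow_lt_pow_left₀ 2 hx.le ?_
  linear_combination cos (α * φ) ^ 2 * hr + hsq +
    (1 - α + α * cos φ) ^ 2 * sin_sq_add_cos_sq (α * φ)

namespace InnerProductGeometry

variable {V : Type*} [NormedAddCommGroup V] [InnerProductSpace ℝ V]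

theorem angle_smul_add_one_sub_smul_lt_mul_angle {α : ℝ} (hα : 0 < α) (hα' : α < 1 / 2)
    {u w : V} (hu : ‖u‖ = 1) (hw : ‖w‖ = 1) (hne : u ≠ w) :
    angle (α • w + (1 - α) • u) u < α * angle w u := by
  set φ := angle w u
  set v := α • w + (1 - α) • u
  have hwu : inner ℝ w u = cos φ := by simp [φ, cos_angle, hu, hw]
  have hφ : 0 < φ := (angle_nonneg w u).lt_of_ne fun h ↦
    hne ((inner_eq_one_iff_of_norm_eq_one hw hu).1 (by rw [hwu, show φ = 0 from h.symm, cos_zero])).symm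
  have hvu : inner ℝ v u = 1 - α + α * cos φ := by
    simp only [v, inner_add_left, real_inner_smul_left, hwu, real_inner_self_eq_norm_sq, hu]
    ring
  have hv : ‖v‖ ^ 2 = (1 - α + α * cos φ) ^ 2 + (α * sin φ) ^ 2 := by
    rw [norm_add_sq_real, norm_smul, norm_smul, real_inner_smul_left, real_inner_smul_right,
      hwu, hu, hw, norm_of_nonneg hα.le, norm_of_nonneg (by linarith : 0 ≤ 1 - α)]
    linear_combination -α ^ 2 * sin_sq_add_cos_sq φ
  have hlt := mul_cos_mul_lt hα hα' hφ (angle_le_pi w u) hv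
  have hv0 : 0 < ‖v‖ := norm_pos_iff.2 fun h ↦ by
    rw [h, inner_zero_left] at hvu
    nlinarith [neg_one_le_cos φ]
  by_contra! hle
  have hcos := cos_le_cos_of_nonneg_of_le_pi (by positivity) (angle_le_pi v u) hle
  rw [cos_angle, hu, mul_one, hvu, div_le_iff₀ hv0] at hcos
  linarith

end InnerProductGeometry

/-- Finding (a): under truthful reporting, the fraction of disputed cases where the minority
prevails, `arccos⟪θ_C, θ*_A⟫ / arccos⟪θ*_D, θ*_A⟫`, is strictly less than `α`. -/
theorem stmt_2 (α : ℝ) (hα : 0 < α) (hα' : α < 1 / 2)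
    (θAstar θDstar : EuclideanSpace ℝ (Fin 2))
    (hA : ‖θAstar‖ = 1) (hD : ‖θDstar‖ = 1) (hne : θAstar ≠ θDstar) :
    Real.arccos (inner ℝ (aggregate α θAstar θDstar) θAstar : ℝ) <
      α * Real.arccos (inner ℝ θDstar θAstar : ℝ) := by
  have h := InnerProductGeometry.angle_smul_add_one_sub_smul_lt_mul_angle hα hα' hA hD hne
  rwa [InnerProductGeometry.angle, InnerProductGeometry.angle, hA, hD, mul_one, mul_one, div_one,
    ← inv_mul_eq_div, ← real_inner_smul_left] at h
end

section
/- Let 0 < α < 1/2 and let θ_D and θ*_A be unit vectors in ℝ². Set c = ⟪θ_D, θ*_A⟫ and define θ_A = ([α c + √(α² c² − 2α + 1)] θ*_A − α θ_D)/(1 − α). Then ‖θ_A‖ = 1 and θ_C(θ_A, θ_D) = θ*_A; in particular, for any fixed reported vector θ_D of the minority, the majority can report a unit vector making the aggregate equal to its true preference vector θ*_A. -/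
open Real

/-! The majority reports `θ_A = (β θ*_A − α θ_D)/(1 − α)`, so that the unnormalised aggregate
is `β θ*_A`. The coefficient `β` is the positive root of `β² − 2αcβ − (1 − 2α) = 0`, which is
exactly the condition `‖β θ*_A − α θ_D‖ = 1 − α` making `θ_A` a unit vector. -/

noncomputable def reportCoeff (α c : ℝ) : ℝ :=
  α * c + √(α ^ 2 * c ^ 2 - 2 * α + 1)

section reportCoeff

variable {α : ℝ} (c : ℝ)

lemma reportCoeff_sq_sub (hα : α ≤ 1 / 2) :
    reportCoeff α c ^ 2 - 2 * α * c * reportCoeff α c + α ^ 2 = (1 - α) ^ 2 := by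
  have hrad : 0 ≤ α ^ 2 * c ^ 2 - 2 * α + 1 := by nlinarith [sq_nonneg (α * c)]
  have hsq := Real.sq_sqrt hrad
  unfold reportCoeff
  nlinarith

lemma reportCoeff_pos (hα : α < 1 / 2) : 0 < reportCoeff α c := by
  have hrad : (α * c) ^ 2 < α ^ 2 * c ^ 2 - 2 * α + 1 := by nlinarith
  have hlt : |α * c| < √(α ^ 2 * c ^ 2 - 2 * α + 1) :=
    Real.lt_sqrt_of_sq_lt (by rwa [sq_abs])
  unfold reportCoeff
  linarith [neg_abs_le (α * c)]

end reportCoeff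

section InnerProductSpace

variable {E : Type*} [NormedAddCommGroup E] [InnerProductSpace ℝ E]

lemma norm_smul_sub_smul_sq_of_norm_eq_one {u d : E} (hu : ‖u‖ = 1) (hd : ‖d‖ = 1)
    (β α : ℝ) :
    ‖β • u - α • d‖ ^ 2 = β ^ 2 - 2 * α * inner ℝ d u * β + α ^ 2 := by
  rw [norm_sub_sq_real, norm_smul, norm_smul, hu, hd, real_inner_smul_left,
    real_inner_smul_right, real_inner_comm, Real.norm_eq_abs, Real.norm_eq_abs]
  simp only [mul_one, sq_abs]
  ring

lemma norm_reportCoeff_smul_sub {u d : E} (hu : ‖u‖ = 1) (hd : ‖d‖ = 1) {α : ℝ}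
    (hα : α ≤ 1 / 2) : ‖reportCoeff α (inner ℝ d u) • u - α • d‖ = 1 - α := by
  refine (pow_left_inj₀ (norm_nonneg _) (by linarith) two_ne_zero).mp ?_
  rw [norm_smul_sub_smul_sq_of_norm_eq_one hu hd, reportCoeff_sq_sub _ hα]

lemma inv_norm_smul_smul_of_norm_eq_one {u : E} (hu : ‖u‖ = 1) {β : ℝ} (hβ : 0 < β) :
    ‖β • u‖⁻¹ • β • u = u := by
  rw [norm_smul, hu, mul_one, Real.norm_of_nonneg hβ.le, smul_smul, inv_mul_cancel₀ hβ.ne',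
    one_smul]

end InnerProductSpace

lemma aggregate_inv_smul_sub {α : ℝ} (hα : α ≠ 1) (w θD : EuclideanSpace ℝ (Fin 2)) :
    aggregate α ((1 - α)⁻¹ • (w - α • θD)) θD = ‖w‖⁻¹ • w := by
  rw [aggregate, smul_smul, mul_inv_cancel₀ (sub_ne_zero.mpr hα.symm), one_smul,
    add_sub_cancel]

theorem stmt_4_general (α : ℝ) (hα' : α < 1 / 2)
    (θD θAstar : EuclideanSpace ℝ (Fin 2)) (hD : ‖θD‖ = 1) (hAstar : ‖θAstar‖ = 1) :
    ‖(1 - α)⁻¹ •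
        ((α * (inner ℝ θD θAstar : ℝ) +
            Real.sqrt (α ^ 2 * (inner ℝ θD θAstar : ℝ) ^ 2 - 2 * α + 1)) • θAstar
          - α • θD)‖ = 1 ∧
    aggregate α
        ((1 - α)⁻¹ •
          ((α * (inner ℝ θD θAstar : ℝ) +
              Real.sqrt (α ^ 2 * (inner ℝ θD θAstar : ℝ) ^ 2 - 2 * α + 1)) • θAstar
            - α • θD))
        θD = θAstar := by
  have h1α : 0 < 1 - α := by linarith
  set w := reportCoeff α (inner ℝ θD θAstar) • θAstar
  change ‖(1 - α)⁻¹ • (w - α • θD)‖ = 1 ∧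
    aggregate α ((1 - α)⁻¹ • (w - α • θD)) θD = θAstar
  refine ⟨?_, ?_⟩
  · rw [norm_smul, norm_reportCoeff_smul_sub hAstar hD hα'.le,
      Real.norm_of_nonneg (inv_nonneg.mpr h1α.le), inv_mul_cancel₀ h1α.ne']
  · rw [aggregate_inv_smul_sub (by linarith)]
    exact inv_norm_smul_smul_of_norm_eq_one hAstar (reportCoeff_pos _ hα')

/-- Lemma 1: for any reported minority vector `θ_D`, the majority can report the unit vector
of Equation 2 so that the aggregate equals its true preference vector `θ*_A`. -/
theorem stmt_4 (α : ℝ) (hα : 0 < α) (hα' : α < 1 / 2)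
    (θD θAstar : EuclideanSpace ℝ (Fin 2)) (hD : ‖θD‖ = 1) (hAstar : ‖θAstar‖ = 1) :
    ‖(1 - α)⁻¹ •
        ((α * (inner ℝ θD θAstar : ℝ) +
            Real.sqrt (α ^ 2 * (inner ℝ θD θAstar : ℝ) ^ 2 - 2 * α + 1)) • θAstar
          - α • θD)‖ = 1 ∧
    aggregate α
        ((1 - α)⁻¹ •
          ((α * (inner ℝ θD θAstar : ℝ) +
              Real.sqrt (α ^ 2 * (inner ℝ θD θAstar : ℝ) ^ 2 - 2 * α + 1)) • θAstar
            - α • θD))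
        θD = θAstar :=
  stmt_4_general α hα' θD θAstar hD hAstar
end

section
/- Let 0 < α < 1/2 and let θ_A and θ_D be unit vectors in ℝ², with aggregate θ_C = θ_C(θ_A, θ_D). Then arccos(⟪θ_C, θ_A⟫) ≤ arcsin(α/(1−α)). -/
/-!
The unnormalized aggregate `v = α θ_D + (1 - α) θ_A` lies within distance `α` of `w = (1 - α) θ_A`,
and `α < ‖w‖ = 1 - α`. A vector in the closed ball of radius `r < ‖w‖` about `w` makes an angle at
most `arcsin (r / ‖w‖)` with `w`: the extreme vectors span the tangents from the origin to the ball.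
Normalizing `v` and scaling `w` do not change the angle.
-/

open Real InnerProductGeometry
open scoped RealInnerProductSpace

theorem arccos_le_arcsin_of_one_sub_sq_le {c y : ℝ} (hc : 0 ≤ c) (hy : 0 ≤ y)
    (h : 1 - y ^ 2 ≤ c ^ 2) : arccos c ≤ arcsin y := by
  rw [arcsin_eq_arccos hy]
  refine arccos_le_arccos ?_
  calc √(1 - y ^ 2) ≤ √(c ^ 2) := sqrt_le_sqrt h
    _ = c := sqrt_sq hc

section InnerProductSpace

variable {V : Type*} [NormedAddCommGroup V] [InnerProductSpace ℝ V]

theorem inner_nonneg_of_norm_sub_le {v w : V} {r : ℝ} (hr : r ≤ ‖w‖) (h : ‖v - w‖ ≤ r) :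
    0 ≤ ⟪v, w⟫ := by
  have hcs := neg_le_of_abs_le (abs_real_inner_le_norm (v - w) w)
  have hsplit : ⟪v, w⟫ = ‖w‖ ^ 2 + ⟪v - w, w⟫ := by
    rw [inner_sub_left, real_inner_self_eq_norm_sq]; ring
  nlinarith [norm_nonneg w, norm_nonneg (v - w)]

theorem sq_norm_sub_sq_mul_sq_norm_le_sq_inner {v w : V} {r : ℝ} (hr : r ≤ ‖w‖)
    (h : ‖v - w‖ ≤ r) : (‖w‖ ^ 2 - r ^ 2) * ‖v‖ ^ 2 ≤ ⟪v, w⟫ ^ 2 := by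
  set e := v - w
  have hv : v = w + e := by simp [e]
  have hr0 : 0 ≤ r := (norm_nonneg e).trans h
  have hE : ‖e‖ ^ 2 ≤ r ^ 2 := pow_le_pow_left₀ (norm_nonneg e) h 2
  have hW : r ^ 2 ≤ ‖w‖ ^ 2 := pow_le_pow_left₀ hr0 hr 2
  have hinner : ⟪v, w⟫ = ‖w‖ ^ 2 + ⟪e, w⟫ := by
    rw [hv, inner_add_left, real_inner_self_eq_norm_sq]
  have hnorm : ‖v‖ ^ 2 = ‖w‖ ^ 2 + 2 * ⟪e, w⟫ + ‖e‖ ^ 2 := by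
    rw [hv, norm_add_sq_real, real_inner_comm]
  -- `⟪v, w⟫² - (‖w‖² - r²)‖v‖² = (⟪e, w⟫ + r²)² + (‖w‖² - r²)(r² - ‖e‖²)`
  rw [hinner, hnorm]
  nlinarith [sq_nonneg (⟪e, w⟫ + r ^ 2), mul_nonneg (sub_nonneg.2 hW) (sub_nonneg.2 hE)]

theorem angle_le_arcsin_of_norm_sub_le {v w : V} {r : ℝ} (hr : r < ‖w‖) (h : ‖v - w‖ ≤ r) :
    angle v w ≤ arcsin (r / ‖w‖) := by
  have hr0 : 0 ≤ r := (norm_nonneg _).trans h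
  have hw : 0 < ‖w‖ := hr0.trans_lt hr
  have hv : 0 < ‖v‖ := by
    have := norm_sub_norm_le w v
    rw [norm_sub_rev] at this
    linarith
  refine arccos_le_arcsin_of_one_sub_sq_le
    (div_nonneg (inner_nonneg_of_norm_sub_le hr.le h) (by positivity)) (by positivity) ?_
  have key := sq_norm_sub_sq_mul_sq_norm_le_sq_inner hr.le h
  rw [div_pow, div_pow, mul_pow, le_div_iff₀ (by positivity)]
  field_simp
  linarith

end InnerProductSpace

/-- Lemma 2 (inequality): the angle between the aggregate and the majority's reported vector
is at most `arcsin(α/(1−α))`. -/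
theorem stmt_5 (α : ℝ) (hα : 0 < α) (hα' : α < 1 / 2)
    (θA θD : EuclideanSpace ℝ (Fin 2)) (hA : ‖θA‖ = 1) (hD : ‖θD‖ = 1) :
    Real.arccos (inner ℝ (aggregate α θA θD) θA : ℝ) ≤ Real.arcsin (α / (1 - α)) := by
  have hβ : 0 < 1 - α := by linarith
  set v := α • θD + (1 - α) • θA
  have hangle : arccos ⟪aggregate α θA θD, θA⟫ = angle v ((1 - α) • θA) := by
    rw [angle_smul_right_of_pos _ _ hβ, angle, aggregate,
      real_inner_smul_left, hA, mul_one, inv_mul_eq_div]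
  have hnorm : ‖(1 - α) • θA‖ = 1 - α := by rw [norm_smul, hA, mul_one, norm_of_nonneg hβ.le]
  have hdev : ‖v - (1 - α) • θA‖ = α := by
    rw [add_sub_cancel_right, norm_smul, hD, mul_one, norm_of_nonneg hα.le]
  have h := angle_le_arcsin_of_norm_sub_le (by linarith [hnorm]) hdev.le
  rwa [hnorm, ← hangle] at h
end

section
/- Let 0 < α < 1/2 and let θ_A and θ_D be unit vectors in ℝ², with aggregate θ_C = θ_C(θ_A, θ_D). Then arccos(⟪θ_C, θ_A⟫) = arcsin(α/(1−α)) if and only if ⟪θ_D, θ_C⟫ = 0. -/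
open Real

/-
Write `v = α θ_D + (1 - α) θ_A` and `θ_C = v / ‖v‖`. Expanding `(1 - α) θ_A = v - α θ_D` gives
`((1 - α) ⟪θ_C, θ_A⟫)² = 1 - 2α + (α ⟪θ_D, θ_C⟫)²`, while `⟪v, θ_A⟫ ≥ 1 - 2α > 0`. Since
`arccos c = arcsin s` means `c² + s² = 1` for `c, s ∈ [0, 1]`, the angle equals
`arcsin (α / (1 - α))` exactly when `((1 - α) ⟪θ_C, θ_A⟫)² = 1 - 2α`, i.e. when `⟪θ_D, θ_C⟫ = 0`.
-/

open scoped RealInnerProductSpace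

theorem Real.arccos_eq_arcsin_iff_sq_add_sq {x y : ℝ} (hx₀ : 0 ≤ x) (hx₁ : x ≤ 1) (hy₀ : 0 ≤ y)
    (hy₁ : y ≤ 1) : arccos x = arcsin y ↔ x ^ 2 + y ^ 2 = 1 := by
  have hx2 : x ^ 2 ≤ 1 := pow_le_one₀ hx₀ hx₁
  rw [arccos_eq_arcsin hx₀, arcsin_inj (by linarith [sqrt_nonneg (1 - x ^ 2)])
    (sqrt_le_one.mpr (by nlinarith)) (by linarith) hy₁, sqrt_eq_iff_eq_sq (by linarith) hy₀]
  constructor <;> intro h <;> linarith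

section Aggregate

variable {E : Type*} [NormedAddCommGroup E] [InnerProductSpace ℝ E] {α : ℝ} {A D : E}

theorem inner_convex_combination_pos (hA : ‖A‖ = 1) (hD : ‖D‖ = 1) (hα : 0 ≤ α)
    (hα' : α < 1 / 2) : 0 < ⟪α • D + (1 - α) • A, A⟫ := by
  have hDA : ⟪D, A⟫ ≥ -1 := by
    have := neg_le_of_abs_le (abs_real_inner_le_norm D A)
    rwa [hA, hD, mul_one] at this
  rw [inner_add_left, real_inner_smul_left, real_inner_smul_left, real_inner_self_eq_norm_sq, hA]
  nlinarith

theorem sq_inner_convex_combination (hA : ‖A‖ = 1) (hD : ‖D‖ = 1) :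
    ((1 - α) * ⟪α • D + (1 - α) • A, A⟫) ^ 2 =
      (1 - 2 * α) * ‖α • D + (1 - α) • A‖ ^ 2 + (α * ⟪D, α • D + (1 - α) • A⟫) ^ 2 := by
  have hAA : ⟪A, A⟫ = 1 := by rw [real_inner_self_eq_norm_sq, hA, one_pow]
  have hDD : ⟪D, D⟫ = 1 := by rw [real_inner_self_eq_norm_sq, hD, one_pow]
  rw [← real_inner_self_eq_norm_sq]
  simp only [inner_add_left, inner_add_right, real_inner_smul_left, real_inner_smul_right, hAA,
    hDD, real_inner_comm A D]
  ring

theorem sq_inner_normalized_convex_combination (hA : ‖A‖ = 1) (hD : ‖D‖ = 1)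
    (hv : α • D + (1 - α) • A ≠ 0) :
    ((1 - α) * ⟪‖α • D + (1 - α) • A‖⁻¹ • (α • D + (1 - α) • A), A⟫) ^ 2 =
      1 - 2 * α + (α * ⟪D, ‖α • D + (1 - α) • A‖⁻¹ • (α • D + (1 - α) • A)⟫) ^ 2 := by
  have hN : ‖α • D + (1 - α) • A‖ ≠ 0 := norm_ne_zero_iff.mpr hv
  rw [real_inner_smul_left, real_inner_smul_right]
  field_simp
  linear_combination sq_inner_convex_combination hA hD

end Aggregate

/-- Lemma 2 (equality condition): the angular pull of the minority is maximal, i.e.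
`arccos⟪θ_C, θ_A⟫ = arcsin(α/(1−α))`, if and only if `θ_D ⊥ θ_C`. -/
theorem stmt_6 (α : ℝ) (hα : 0 < α) (hα' : α < 1 / 2)
    (θA θD : EuclideanSpace ℝ (Fin 2)) (hA : ‖θA‖ = 1) (hD : ‖θD‖ = 1) :
    Real.arccos (inner ℝ (aggregate α θA θD) θA : ℝ) = Real.arcsin (α / (1 - α)) ↔
      (inner ℝ θD (aggregate α θA θD) : ℝ) = 0 := by
  have hvA := inner_convex_combination_pos hA hD hα.le hα'
  have hv : α • θD + (1 - α) • θA ≠ 0 := fun h => by simp [h] at hvA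
  have key := sq_inner_normalized_convex_combination hA hD hv
  rw [← aggregate] at key
  set c := ⟪aggregate α θA θD, θA⟫
  have hc₀ : 0 ≤ c := by
    simp only [c, aggregate, real_inner_smul_left]
    positivity
  have hc₁ : c ≤ 1 := by
    refine (real_inner_le_norm _ _).trans ?_
    rw [aggregate, norm_smul, norm_inv, norm_norm, inv_mul_cancel₀ (norm_ne_zero_iff.mpr hv), hA,
      one_mul]
  have h1α : 0 < 1 - α := by linarith
  rw [Real.arccos_eq_arcsin_iff_sq_add_sq hc₀ hc₁ (by positivity)
    ((div_le_one h1α).mpr (by linarith)), ← sub_eq_zero]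
  have hdefect : c ^ 2 + (α / (1 - α)) ^ 2 - 1 = (α * ⟪θD, aggregate α θA θD⟫ / (1 - α)) ^ 2 := by
    field_simp
    linear_combination key
  rw [hdefect]
  simp [hα.ne', h1α.ne']
end

section
/- Let 0 < α < 1/2 and let θ_A and θ_D be unit vectors in ℝ², with aggregate θ_C = θ_C(θ_A, θ_D). Then (1 − α) · sin(arccos(⟪θ_C, θ_A⟫)) = α · sin(arccos(⟪θ_C, θ_D⟫)). -/
open Real

namespace InnerProductGeometry

variable {V : Type*} [NormedAddCommGroup V] [InnerProductSpace ℝ V]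

theorem arccos_inner_inv_norm_smul_eq_angle (v : V) {θ : V} (hθ : ‖θ‖ = 1) :
    arccos (inner ℝ (‖v‖⁻¹ • v) θ) = angle v θ := by
  rw [angle, real_inner_smul_left, hθ, mul_one, inv_mul_eq_div]

theorem sin_angle_smul_add_smul_mul_norm_mul_norm (x y : V) (s t : ℝ) :
    sin (angle (s • x + t • y) y) * (‖s • x + t • y‖ * ‖y‖) =
      |s| * (sin (angle x y) * (‖x‖ * ‖y‖)) := by
  rw [sin_angle_mul_norm_mul_norm, sin_angle_mul_norm_mul_norm, ← sqrt_sq_eq_abs,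
    ← sqrt_mul (sq_nonneg s)]
  congr 1
  simp only [inner_add_left, inner_add_right, real_inner_smul_left, real_inner_smul_right,
    real_inner_comm x y]
  ring

end InnerProductGeometry

open InnerProductGeometry in
/-- Appendix E Law-of-Sines relation:
`(1 − α) · sin ∠(θ_C, θ_A) = α · sin ∠(θ_C, θ_D)`. -/
theorem stmt_7 (α : ℝ) (hα : 0 < α) (hα' : α < 1 / 2)
    (θA θD : EuclideanSpace ℝ (Fin 2)) (hA : ‖θA‖ = 1) (hD : ‖θD‖ = 1) :
    (1 - α) * Real.sin (Real.arccos (inner ℝ (aggregate α θA θD) θA : ℝ)) =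
      α * Real.sin (Real.arccos (inner ℝ (aggregate α θA θD) θD : ℝ)) := by
  set v := α • θD + (1 - α) • θA
  have hv : 0 < ‖v‖ := by
    have hrev := norm_sub_norm_le ((1 - α) • θA) (-(α • θD))
    rw [sub_neg_eq_add, add_comm, norm_neg, norm_smul, norm_smul, hA, hD,
      Real.norm_of_nonneg hα.le, Real.norm_of_nonneg (by linarith)] at hrev
    linarith
  have hsinA : sin (angle v θA) * ‖v‖ = α * sin (angle θA θD) := by
    simpa only [hA, hD, mul_one, abs_of_pos hα, angle_comm θD θA] using
      sin_angle_smul_add_smul_mul_norm_mul_norm θD θA α (1 - α)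
  have hsinD : sin (angle v θD) * ‖v‖ = (1 - α) * sin (angle θA θD) := by
    have h1α : (0 : ℝ) < 1 - α := by linarith
    simpa only [add_comm ((1 - α) • θA), hA, hD, mul_one, abs_of_pos h1α] using
      sin_angle_smul_add_smul_mul_norm_mul_norm θA θD (1 - α) α
  rw [aggregate, arccos_inner_inv_norm_smul_eq_angle v hA,
    arccos_inner_inv_norm_smul_eq_angle v hD]
  apply mul_right_cancel₀ hv.ne'
  linear_combination (1 - α) * hsinA - α * hsinD
end

section
/- Let 0 < α < 1/2 and let θ*_D be a unit vector in ℝ². For every unit vector θ_A in ℝ² there exists a unit vector θ_D in ℝ² such that arccos(⟪θ_C(θ_A, θ_D), θ*_D⟫) ≤ π − arcsin(α/(1−α)). -/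
/-!
Put `r = α/(1-α) < 1` and `c = √(1-r²)`, and let `p` be a unit vector orthogonal to `θ_A` with
`⟪p, θ*_D⟫ ≥ 0`. The report `θ_D = -r θ_A + c p` makes the aggregate equal to the unit vector
`c θ_A + r p`, whose inner product with `θ*_D` is at least `-c = cos (π - arcsin r)`.
-/

open Real

open Module RealInnerProductSpace

section InnerProductSpace

variable {E : Type*} [NormedAddCommGroup E] [InnerProductSpace ℝ E]

theorem exists_norm_eq_one_inner_eq_zero_inner_nonneg [FiniteDimensional ℝ E]
    (hE : 2 ≤ finrank ℝ E) (a b : E) : ∃ p : E, ‖p‖ = 1 ∧ ⟪a, p⟫ = 0 ∧ 0 ≤ ⟪p, b⟫ := by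
  have hspan : (ℝ ∙ a) ≠ ⊤ := fun h => by
    have := finrank_span_le_card (R := ℝ) ({a} : Set E)
    rw [h, finrank_top] at this
    simp only [Set.toFinset_singleton, Finset.card_singleton] at this
    omega
  obtain ⟨x, hxa, hx⟩ :=
    Submodule.exists_mem_ne_zero_of_ne_bot (mt Submodule.orthogonal_eq_bot_iff.mp hspan)
  have hax : ⟪a, x⟫ = 0 :=
    Submodule.inner_right_of_mem_orthogonal (Submodule.mem_span_singleton_self a) hxa
  set q := ‖x‖⁻¹ • x
  have hq : ‖q‖ = 1 := norm_smul_inv_norm hx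
  have haq : ⟪a, q⟫ = 0 := by simp [q, inner_smul_right, hax]
  rcases le_total 0 ⟪q, b⟫ with hqb | hqb
  · exact ⟨q, hq, haq, hqb⟩
  · exact ⟨-q, by rw [norm_neg, hq], by rw [inner_neg_right, haq, neg_zero],
      by rwa [inner_neg_left, neg_nonneg]⟩

theorem norm_smul_add_smul_of_orthonormal {a p : E} (ha : ‖a‖ = 1) (hp : ‖p‖ = 1)
    (hap : ⟪a, p⟫ = 0) {x y : ℝ} (hxy : x ^ 2 + y ^ 2 = 1) : ‖x • a + y • p‖ = 1 := by
  have h := norm_add_sq_eq_norm_sq_add_norm_sq_real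
    (x := x • a) (y := y • p) (by rw [inner_smul_left, inner_smul_right, hap]; simp)
  rw [norm_smul, norm_smul, ha, hp, mul_one, mul_one, ← sq, ← sq, ← sq, Real.norm_eq_abs,
    Real.norm_eq_abs, sq_abs, sq_abs, hxy] at h
  exact (pow_eq_one_iff_of_nonneg (norm_nonneg _) two_ne_zero).mp h

end InnerProductSpace

theorem aggregate_neg_smul_add_smul {α r c : ℝ} (hα : α < 1) (hr : r * (1 - α) = α)
    (hc : 0 < c) (hrc : r ^ 2 + c ^ 2 = 1) {a p : EuclideanSpace ℝ (Fin 2)}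
    (ha : ‖a‖ = 1) (hp : ‖p‖ = 1) (hap : ⟪a, p⟫ = 0) :
    aggregate α a (-r • a + c • p) = c • a + r • p := by
  have hunit := norm_smul_add_smul_of_orthonormal ha hp hap (by linarith : c ^ 2 + r ^ 2 = 1)
  have hk : 0 < (1 - α) * c := mul_pos (by linarith) hc
  have hsum : α • (-r • a + c • p) + (1 - α) • a = ((1 - α) * c) • (c • a + r • p) := by
    linear_combination (norm := module) (α - 1) • hrc • a + r • hr • a - c • hr • p
  rw [aggregate, hsum, norm_smul, hunit, Real.norm_of_nonneg hk.le, mul_one, smul_smul,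
    inv_mul_cancel₀ hk.ne', one_smul]

theorem arccos_neg_sqrt_one_sub_sq {r : ℝ} (hr : 0 ≤ r) :
    arccos (-√(1 - r ^ 2)) = π - arcsin r := by
  rw [arccos_neg, arcsin_eq_arccos hr]

/-- Lemma 4: whatever unit vector the majority reports, the minority can report a unit vector
bringing the aggregate within angle `π − arcsin(α/(1−α))` of its true preference `θ*_D`. -/
theorem stmt_9 (α : ℝ) (hα : 0 < α) (hα' : α < 1 / 2)
    (θDstar : EuclideanSpace ℝ (Fin 2)) (hDs : ‖θDstar‖ = 1) :
    ∀ θA : EuclideanSpace ℝ (Fin 2), ‖θA‖ = 1 →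
      ∃ θD : EuclideanSpace ℝ (Fin 2), ‖θD‖ = 1 ∧
        Real.arccos (inner ℝ (aggregate α θA θD) θDstar : ℝ) ≤
          Real.pi - Real.arcsin (α / (1 - α)) := by
  intro θA hA
  obtain ⟨p, hp, hAp, hpDs⟩ := exists_norm_eq_one_inner_eq_zero_inner_nonneg
    (by simp) θA θDstar
  set r := α / (1 - α)
  set c := √(1 - r ^ 2)
  have hr : r * (1 - α) = α := div_mul_cancel₀ α (by linarith)
  have hr0 : 0 ≤ r := div_nonneg hα.le (by linarith)
  have hr1 : r < 1 := (div_lt_one (by linarith)).mpr (by linarith)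
  have hc : 0 < c := Real.sqrt_pos.mpr (by nlinarith)
  have hrc : r ^ 2 + c ^ 2 = 1 := by rw [Real.sq_sqrt (by nlinarith)]; ring
  refine ⟨-r • θA + c • p,
    norm_smul_add_smul_of_orthonormal hA hp hAp (by rw [neg_sq]; exact hrc), ?_⟩
  rw [aggregate_neg_smul_add_smul (by linarith) hr hc hrc hA hp hAp,
    ← arccos_neg_sqrt_one_sub_sq hr0]
  apply arccos_le_arccos
  have hADs := neg_one_le_real_inner_of_norm_eq_one hA hDs
  rw [inner_add_left, real_inner_smul_left, real_inner_smul_left]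
  linarith [mul_le_mul_of_nonneg_left hADs hc.le, mul_nonneg hr0 hpDs]
end

section
/- Let d ≥ 2, let 0 < α < 1/2, and let θ*_A, θ*_D be unit vectors in ℝ^d (Euclidean space) with θ*_A ≠ θ*_D. Consider the game in which each player reports a unit vector of ℝ^d, the aggregate is θ_C(θ_A, θ_D) = (α θ_D + (1−α) θ_A)/‖α θ_D + (1−α) θ_A‖, and the payoffs are u_A(θ_A, θ_D) = ⟪θ_C(θ_A, θ_D), θ*_A⟫ and u_D(θ_A, θ_D) = ⟪θ_C(θ_A, θ_D), θ*_D⟫. If (θ'_A, θ'_D) is a pure strategy Nash equilibrium of this game, then both θ'_A and θ'_D lie in the linear span of {θ*_A, θ*_D}. -/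
open Real

/-- The aggregate vector `(α θ_D + (1−α) θ_A)/‖α θ_D + (1−α) θ_A‖` in `ℝ^d`. -/
noncomputable def aggregateD {d : ℕ} (α : ℝ) (θA θD : EuclideanSpace ℝ (Fin d)) :
    EuclideanSpace ℝ (Fin d) :=
  (‖α • θD + (1 - α) • θA‖)⁻¹ • (α • θD + (1 - α) • θA)

/-!
Since `α < 1 - α`, player A can always put the aggregate exactly on `θ*_A`, so at an equilibrium
`α θ'_D + (1 - α) θ'_A = t θ*_A` with `t > 0`; this already puts `θ'_A` in the span of `θ*_A` and
`θ'_D`. If player D deviates to `θ'_D + δ`, the sum becomes `u = t θ*_A + α δ`, and `‖u‖` times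
D's gain equals `⟪α δ, z⟫` with `z = θ*_D - ⟪θ*_A, θ*_D⟫ θ*_A`, up to an error of at most
`‖α δ‖² / t`. Hence `θ'_D` is a critical point of `⟪·, z⟫` on the unit sphere, i.e. `z` is a
multiple of `θ'_D`, which settles the case `z ≠ 0`. If `z = 0` then `θ*_D = -θ*_A`, D's
equilibrium payoff `-1` is the least possible, so even the deviation `-θ'_D` keeps the aggregate
on `θ*_A`; subtracting the two sums gives `θ'_D ∥ θ*_A`.
-/

open RealInnerProductSpace Submodule

section InnerProductSpace

variable {E : Type*} [NormedAddCommGroup E] [InnerProductSpace ℝ E]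

lemma eq_of_norm_le_one_of_one_le_inner {a e : E} (ha : ‖a‖ ≤ 1) (he : ‖e‖ = 1)
    (h : 1 ≤ ⟪a, e⟫) : a = e := by
  have hsq : ‖a‖ ^ 2 ≤ 1 := by nlinarith [norm_nonneg a]
  have : ‖a - e‖ ^ 2 ≤ 0 := by rw [norm_sub_sq_real, he]; linarith
  exact sub_eq_zero.1 (norm_eq_zero.1 (by nlinarith [norm_nonneg (a - e)]))

lemma eq_norm_smul_of_inv_norm_smul_eq {v e : E} (h : ‖v‖⁻¹ • v = e) (he : e ≠ 0) :
    v = ‖v‖ • e ∧ 0 < ‖v‖ := by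
  have hv : v ≠ 0 := by rintro rfl; simp [eq_comm, he] at h
  refine ⟨?_, norm_pos_iff.2 hv⟩
  rw [← h, smul_smul, mul_inv_cancel₀ (norm_ne_zero_iff.2 hv), one_smul]

lemma inner_le_mul_norm_of_inner_inv_norm_smul_le {u f : E} {r : ℝ}
    (h : ⟪‖u‖⁻¹ • u, f⟫ ≤ r) : ⟪u, f⟫ ≤ r * ‖u‖ := by
  rcases eq_or_ne u 0 with rfl | hu
  · simp
  rw [real_inner_smul_left] at h
  have hu' := norm_pos_iff.2 hu
  calc ⟪u, f⟫ = ‖u‖ * (‖u‖⁻¹ * ⟪u, f⟫) := by field_simp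
    _ ≤ ‖u‖ * r := by gcongr
    _ = r * ‖u‖ := mul_comm _ _

lemma exists_norm_eq_one_smul_add_eq_pos_smul {e y : E} (he : ‖e‖ = 1) (hy : ‖y‖ = 1) {α : ℝ}
    (hα : 0 ≤ α) (hα' : α < 1 - α) :
    ∃ x : E, ‖x‖ = 1 ∧ ∃ t : ℝ, 0 < t ∧ α • y + (1 - α) • x = t • e := by
  have hcont : ContinuousOn (fun t : ℝ => ‖t • e - α • y‖) (Set.Icc 0 1) := by fun_prop
  have h0 : ‖(0 : ℝ) • e - α • y‖ = α := by simp [norm_smul, hy, abs_of_nonneg hα]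
  have h1 : 1 - α ≤ ‖(1 : ℝ) • e - α • y‖ := by
    simpa [norm_smul, he, hy, abs_of_nonneg hα] using norm_sub_norm_le e (α • y)
  obtain ⟨t, ⟨ht0, -⟩, ht⟩ :=
    intermediate_value_Icc zero_le_one hcont ⟨h0.symm ▸ hα'.le, h1⟩
  simp only at ht
  have hα1 : (1 - α) ≠ 0 := by linarith
  refine ⟨(1 - α)⁻¹ • (t • e - α • y), ?_, t, ?_, ?_⟩
  · rw [norm_smul, ht, norm_inv, Real.norm_eq_abs, abs_of_pos (by linarith),
      inv_mul_cancel₀ hα1]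
  · refine ht0.lt_of_ne fun h => ?_
    rw [← h, h0] at ht
    exact hα'.ne ht
  · rw [smul_smul, mul_inv_cancel₀ hα1, one_smul, add_sub_cancel]

lemma mul_norm_smul_add_le {e : E} (he : ‖e‖ = 1) {t : ℝ} (ht : 0 ≤ t) (δ : E) :
    t * ‖t • e + δ‖ ≤ t * (t + ⟪δ, e⟫) + ‖δ‖ ^ 2 := by
  have hsq : ‖t • e + δ‖ ^ 2 = t ^ 2 + 2 * t * ⟪δ, e⟫ + ‖δ‖ ^ 2 := by
    rw [norm_add_sq_real, norm_smul, real_inner_smul_left, he, real_inner_comm,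
      Real.norm_eq_abs, abs_of_nonneg ht]
    ring
  have hβ := abs_le.1 (abs_real_inner_le_norm δ e)
  rw [he, mul_one] at hβ
  have hrhs : 0 ≤ t * (t + ⟪δ, e⟫) + ‖δ‖ ^ 2 := by nlinarith
  nlinarith [norm_nonneg (t • e + δ), sq_nonneg (t * ⟪δ, e⟫ + ‖δ‖ ^ 2)]

lemma eq_norm_smul_of_forall_inner_le {x m : E} (hx : ‖x‖ = 1)
    (h : ∀ y : E, ‖y‖ = 1 → ⟪y, m⟫ ≤ ⟪x, m⟫) : m = ‖m‖ • x := by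
  rcases eq_or_ne m 0 with rfl | hm
  · simp
  have hle := h _ (norm_smul_inv_norm (𝕜 := ℝ) hm)
  rw [RCLike.ofReal_real_eq_id, id, real_inner_smul_left, real_inner_self_eq_norm_sq] at hle
  have hm' := norm_pos_iff.2 hm
  have heq : ⟪x, m⟫ = ‖x‖ * ‖m‖ :=
    le_antisymm (real_inner_le_norm x m)
      (by rw [hx, one_mul]; field_simp at hle; nlinarith)
  simpa [hx] using (inner_eq_norm_mul_iff_real.1 heq).symm

lemma exists_eq_smul_of_forall_inner_sub_le {x z : E} {c : ℝ} (hx : ‖x‖ = 1)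
    (h : ∀ y : E, ‖y‖ = 1 → ⟪y - x, z⟫ ≤ c * ‖y - x‖ ^ 2) : ∃ r : ℝ, z = r • x := by
  -- on the sphere `‖y - x‖² = 2 ⟪x - y, x⟫`, so `x` maximises `⟪·, z + 2c x⟫`
  have hmax : ∀ y : E, ‖y‖ = 1 → ⟪y, z + (2 * c) • x⟫ ≤ ⟪x, z + (2 * c) • x⟫ := by
    intro y hy
    have h1 := h y hy
    rw [norm_sub_sq_real, hy, hx] at h1
    simp only [inner_add_right, inner_sub_left, real_inner_smul_right,
      real_inner_self_eq_norm_sq, hx] at h1 ⊢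
    nlinarith
  refine ⟨‖z + (2 * c) • x‖ - 2 * c, ?_⟩
  rw [sub_smul, ← eq_norm_smul_of_forall_inner_le hx hmax]
  abel

lemma inner_sub_smul_le_of_forall_inner_le {e f x v : E} {α t : ℝ} (he : ‖e‖ = 1)
    (hf : ‖f‖ = 1) (hα : 0 < α) (ht : 0 < t) (hsum : α • x + v = t • e)
    (hbest : ∀ y : E, ‖y‖ = 1 → ⟪α • y + v, f⟫ ≤ ⟪e, f⟫ * ‖α • y + v‖) {y : E} (hy : ‖y‖ = 1) :
    ⟪y - x, t • (f - ⟪e, f⟫ • e)⟫ ≤ α * ‖y - x‖ ^ 2 := by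
  set ρ := ⟪e, f⟫
  set δ := α • (y - x)
  have hu : α • y + v = t • e + δ := by rw [← hsum]; module
  have hρ : |ρ| ≤ 1 := by simpa [he, hf] using abs_real_inner_le_norm e f
  have hdev := hbest y hy
  rw [hu, inner_add_left, real_inner_smul_left] at hdev
  have hupper := mul_norm_smul_add_le he ht.le δ
  have hlower : t * (t + ⟪δ, e⟫) ≤ t * ‖t • e + δ‖ := by
    have := real_inner_le_norm (t • e + δ) e
    rw [inner_add_left, real_inner_smul_left, real_inner_self_eq_norm_sq, he] at this
    nlinarith
  -- `t ‖t • e + δ‖ - t (t + ⟪δ, e⟫)` lies in `[0, ‖δ‖²]` and `|ρ| ≤ 1`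
  have hkey : t * (⟪δ, f⟫ - ρ * ⟪δ, e⟫) ≤ ‖δ‖ ^ 2 := by
    nlinarith [abs_le.1 hρ]
  have hδz : ⟪δ, f⟫ - ρ * ⟪δ, e⟫ = α * ⟪y - x, f - ρ • e⟫ := by
    simp only [δ, real_inner_smul_left, inner_sub_right, real_inner_smul_right]
    ring
  rw [hδz, norm_smul, Real.norm_eq_abs, abs_of_pos hα, mul_pow] at hkey
  rw [real_inner_smul_right]
  nlinarith

lemma mem_span_singleton_of_forall_norm_le_inner {e x v : E} {α t : ℝ} (he : ‖e‖ = 1)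
    (hx : ‖x‖ = 1) (hα : α ≠ 0) (hsum : α • x + v = t • e)
    (hbest : ∀ y : E, ‖y‖ = 1 → ‖α • y + v‖ ≤ ⟪α • y + v, e⟫) : x ∈ ℝ ∙ e := by
  set u := α • -x + v
  have hle : ‖u‖ * ‖e‖ ≤ ⟪u, e⟫ := by rw [he, mul_one]; exact hbest (-x) (by rwa [norm_neg])
  have hu : u = ‖u‖ • e := by
    simpa [he] using inner_eq_norm_mul_iff_real.1 (le_antisymm (real_inner_le_norm u e) hle)
  refine mem_span_singleton.2 ⟨(2 * α)⁻¹ * (t - ‖u‖), ?_⟩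
  rw [mul_smul, sub_smul, ← hsum, ← hu, inv_smul_eq_iff₀ (mul_ne_zero two_ne_zero hα)]
  module

lemma mem_span_pair_of_forall_inner_le {e f x v : E} {α t : ℝ} (he : ‖e‖ = 1) (hf : ‖f‖ = 1)
    (hef : e ≠ f) (hx : ‖x‖ = 1) (hα : 0 < α) (ht : 0 < t) (hsum : α • x + v = t • e)
    (hbest : ∀ y : E, ‖y‖ = 1 → ⟪α • y + v, f⟫ ≤ ⟪e, f⟫ * ‖α • y + v‖) :
    x ∈ span ℝ {e, f} := by
  by_cases hz : f - ⟪e, f⟫ • e = 0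
  · have hfe : f = -e := by
      rw [sub_eq_zero] at hz
      have habs : |⟪e, f⟫| = 1 := by
        rw [hz, norm_smul, he, mul_one, Real.norm_eq_abs] at hf
        exact hf
      rcases abs_eq (zero_le_one' ℝ) |>.1 habs with h | h
      · exact absurd (by rw [hz, h, one_smul]) hef
      · rw [hz, h, neg_one_smul]
    subst hfe
    refine span_mono (by simp) (mem_span_singleton_of_forall_norm_le_inner he hx hα.ne' hsum ?_)
    intro y hy
    simpa [inner_neg_right, real_inner_self_eq_norm_sq, he] using hbest y hy
  · obtain ⟨r, hr⟩ := exists_eq_smul_of_forall_inner_sub_le hx fun y hy =>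
      inner_sub_smul_le_of_forall_inner_le he hf hα ht hsum hbest hy
    have hr0 : r ≠ 0 := by
      rintro rfl
      rw [zero_smul, smul_eq_zero] at hr
      exact hr.elim ht.ne' hz
    rw [← inv_smul_smul₀ hr0 x, ← hr]
    exact smul_mem _ _ (smul_mem _ _ (sub_mem (subset_span (by simp))
      (smul_mem _ _ (subset_span (by simp)))))

end InnerProductSpace

lemma norm_aggregateD_le {d : ℕ} (α : ℝ) (x y : EuclideanSpace ℝ (Fin d)) :
    ‖aggregateD α x y‖ ≤ 1 := by
  rcases eq_or_ne (α • y + (1 - α) • x) 0 with h | h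
  · simp [aggregateD, h]
  · exact (norm_smul_inv_norm (𝕜 := ℝ) h).le

lemma aggregateD_eq_of_forall_inner_le {d : ℕ} {α : ℝ} (hα : 0 ≤ α) (hα' : α < 1 - α)
    {e x y : EuclideanSpace ℝ (Fin d)} (he : ‖e‖ = 1) (hy : ‖y‖ = 1)
    (hbest : ∀ x' : EuclideanSpace ℝ (Fin d), ‖x'‖ = 1 →
      ⟪aggregateD α x' y, e⟫ ≤ ⟪aggregateD α x y, e⟫) :
    aggregateD α x y = e := by
  obtain ⟨x₀, hx₀, t, ht, hsum⟩ := exists_norm_eq_one_smul_add_eq_pos_smul he hy hα hα'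
  have hx₀e : aggregateD α x₀ y = e := by
    rw [aggregateD, hsum, norm_smul, he, Real.norm_eq_abs, abs_of_pos ht, mul_one, smul_smul,
      inv_mul_cancel₀ ht.ne', one_smul]
  refine eq_of_norm_le_one_of_one_le_inner (norm_aggregateD_le α x y) he ?_
  simpa [hx₀e, real_inner_self_eq_norm_sq, he] using hbest x₀ hx₀

theorem stmt_16_general (d : ℕ) (α : ℝ) (hα : 0 < α) (hα' : α < 1 / 2)
    (θAstar θDstar θA' θD' : EuclideanSpace ℝ (Fin d))
    (hAs : ‖θAstar‖ = 1) (hDs : ‖θDstar‖ = 1) (hne : θAstar ≠ θDstar)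
    (hD' : ‖θD'‖ = 1)
    (hNashA : ∀ θA : EuclideanSpace ℝ (Fin d), ‖θA‖ = 1 →
      (inner ℝ (aggregateD α θA θD') θAstar : ℝ) ≤ (inner ℝ (aggregateD α θA' θD') θAstar : ℝ))
    (hNashD : ∀ θD : EuclideanSpace ℝ (Fin d), ‖θD‖ = 1 →
      (inner ℝ (aggregateD α θA' θD) θDstar : ℝ) ≤ (inner ℝ (aggregateD α θA' θD') θDstar : ℝ)) :
    θA' ∈ Submodule.span ℝ ({θAstar, θDstar} : Set (EuclideanSpace ℝ (Fin d))) ∧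
    θD' ∈ Submodule.span ℝ ({θAstar, θDstar} : Set (EuclideanSpace ℝ (Fin d))) := by
  have hagg : aggregateD α θA' θD' = θAstar :=
    aggregateD_eq_of_forall_inner_le hα.le (by linarith) hAs hD' hNashA
  obtain ⟨hsum, ht⟩ := eq_norm_smul_of_inv_norm_smul_eq hagg (norm_ne_zero_iff.1 (by simp [hAs]))
  set t := ‖α • θD' + (1 - α) • θA'‖
  have hD'mem : θD' ∈ span ℝ {θAstar, θDstar} :=
    mem_span_pair_of_forall_inner_le hAs hDs hne hD' hα ht hsum fun y hy =>
      inner_le_mul_norm_of_inner_inv_norm_smul_le (hagg ▸ hNashD y hy)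
  have hA'eq : θA' = (1 - α)⁻¹ • (t • θAstar - α • θD') := by
    rw [← hsum, add_sub_cancel_left, inv_smul_smul₀ (by linarith)]
  refine ⟨?_, hD'mem⟩
  rw [hA'eq]
  exact smul_mem _ _ (sub_mem (smul_mem _ _ (subset_span (by simp))) (smul_mem _ _ hD'mem))

/-- Appendix C proposition: any pure strategy Nash equilibrium of the `d`-dimensional game
lies in the linear span of the true preference vectors `{θ*_A, θ*_D}`. -/
theorem stmt_16 (d : ℕ) (hd : 2 ≤ d) (α : ℝ) (hα : 0 < α) (hα' : α < 1 / 2)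
    (θAstar θDstar θA' θD' : EuclideanSpace ℝ (Fin d))
    (hAs : ‖θAstar‖ = 1) (hDs : ‖θDstar‖ = 1) (hne : θAstar ≠ θDstar)
    (hA' : ‖θA'‖ = 1) (hD' : ‖θD'‖ = 1)
    (hNashA : ∀ θA : EuclideanSpace ℝ (Fin d), ‖θA‖ = 1 →
      (inner ℝ (aggregateD α θA θD') θAstar : ℝ) ≤ (inner ℝ (aggregateD α θA' θD') θAstar : ℝ))
    (hNashD : ∀ θD : EuclideanSpace ℝ (Fin d), ‖θD‖ = 1 →
      (inner ℝ (aggregateD α θA' θD) θDstar : ℝ) ≤ (inner ℝ (aggregateD α θA' θD') θDstar : ℝ)) :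
    θA' ∈ Submodule.span ℝ ({θAstar, θDstar} : Set (EuclideanSpace ℝ (Fin d))) ∧
    θD' ∈ Submodule.span ℝ ({θAstar, θDstar} : Set (EuclideanSpace ℝ (Fin d))) :=
  stmt_16_general d α hα hα' θAstar θDstar θA' θD' hAs hDs hne hD' hNashA hNashD
end
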